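/- arXiv:1212.5684 — 4 statements merged into one kernel-verified Lean document; each statement's English description precedes it below -/
import Mathlib

section
/- Let 0 < θ < 1/2, d > 1, a > 1, and let u be a C² solution on [0,∞) of u'' + ((d-1)/r)u' + f(u) = 0 with u(0) = a, u'(0) = 0, where f(s) = s - s|s|^{-2θ}. Then u(r) < a for all r > 0. -/
/-!
The energy `E(r) = u'(r)^2 / 2 + F(u(r))`, with `F` a primitive of `f`, satisfies
`E'(r) = -((d - 1) / r) u'(r)^2 ≤ 0`, so it is nonincreasing and `E(0) = F(a)`. Since `f > 0` on
`[a, ∞)`, `F` is strictly increasing there, so `u(r) ≥ a` would force `E` to be constant on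
`[0, r]`. Then `u' ≡ 0` and `u ≡ a` on `[0, r]`, and the equation reduces to `f(a) = 0`.
-/

open Set Filter Topology

lemma continuous_mul_abs_rpow {p : ℝ} (hp : -1 < p) : Continuous fun s : ℝ => s * |s| ^ p := by
  refine continuous_iff_continuousAt.2 fun x => ?_
  rcases eq_or_ne x 0 with rfl | hx
  · have hnorm : ∀ s : ℝ, ‖s * |s| ^ p‖ = |s| ^ (1 + p) := fun s => by
      rw [Real.norm_eq_abs, abs_mul, abs_of_nonneg (Real.rpow_nonneg (abs_nonneg s) _),
        Real.rpow_add' (abs_nonneg s) (by linarith), Real.rpow_one]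
    have hlim : Tendsto (fun s : ℝ => |s| ^ (1 + p)) (𝓝 0) (𝓝 0) := by
      have :=
        ((Real.continuous_rpow_const (by linarith : 0 ≤ 1 + p)).comp continuous_abs).tendsto 0
      simpa [Function.comp_def, Real.zero_rpow (by linarith : 1 + p ≠ 0)] using this
    simpa [ContinuousAt] using squeeze_zero_norm (fun s => (hnorm s).le) hlim
  · exact continuousAt_id.mul ((Real.continuousAt_rpow_const _ _
      (Or.inl (abs_ne_zero.2 hx))).comp continuous_abs.continuousAt)

lemma mul_abs_rpow_lt_self {p s : ℝ} (hp : p < 0) (hs : 1 < s) : s * |s| ^ p < s := by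
  rw [abs_of_pos (by linarith)]
  have : s ^ p < 1 := Real.rpow_lt_one_of_one_lt_of_neg hs hp
  nlinarith

noncomputable def radialEnergy (F u : ℝ → ℝ) (r : ℝ) : ℝ := deriv u r ^ 2 / 2 + F (u r)

section RadialEnergy

variable {f F u : ℝ → ℝ} {d : ℝ}

lemma hasDerivAt_radialEnergy (hF : ∀ t, HasDerivAt F (f t) t) (hu : ContDiff ℝ 2 u)
    (hode : ∀ r, 0 < r → deriv (deriv u) r + (d - 1) / r * deriv u r + f (u r) = 0)
    {r : ℝ} (hr : 0 < r) :
    HasDerivAt (radialEnergy F u) (-((d - 1) / r * deriv u r ^ 2)) r := by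
  have h : HasDerivAt (radialEnergy F u)
      (2 * deriv u r ^ 1 * deriv (deriv u) r / 2 + f (u r) * deriv u r) r :=
    (((hu.differentiable_deriv_two r).hasDerivAt.fun_pow 2).div_const 2).add
      ((hF (u r)).comp r (hu.differentiable (by norm_num) r).hasDerivAt)
  refine h.congr_deriv ?_
  linear_combination deriv u r * hode r hr

lemma antitoneOn_radialEnergy (hd : 1 ≤ d) (hF : ∀ t, HasDerivAt F (f t) t)
    (hu : ContDiff ℝ 2 u)
    (hode : ∀ r, 0 < r → deriv (deriv u) r + (d - 1) / r * deriv u r + f (u r) = 0) :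
    AntitoneOn (radialEnergy F u) (Ici 0) := by
  have hFc : Continuous F := continuous_iff_continuousAt.2 fun t => (hF t).continuousAt
  have hEc : Continuous (radialEnergy F u) :=
    ((hu.continuous_deriv (by norm_num)).pow 2).div_const 2 |>.add (hFc.comp hu.continuous)
  refine antitoneOn_of_deriv_nonpos (convex_Ici 0) hEc.continuousOn (fun r hr => ?_)
    fun r hr => ?_
  all_goals rw [interior_Ici] at hr
  · exact (hasDerivAt_radialEnergy hF hu hode hr).differentiableAt.differentiableWithinAt
  · rw [(hasDerivAt_radialEnergy hF hu hode hr).deriv, neg_nonpos]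
    exact mul_nonneg (div_nonneg (by linarith) hr.le) (sq_nonneg _)

lemma deriv_eq_zero_of_radialEnergy_eq (hd : 1 < d) (hF : ∀ t, HasDerivAt F (f t) t)
    (hu : ContDiff ℝ 2 u)
    (hode : ∀ r, 0 < r → deriv (deriv u) r + (d - 1) / r * deriv u r + f (u r) = 0)
    {r : ℝ} (hE : radialEnergy F u r = radialEnergy F u 0) : ∀ s ∈ Ioo 0 r, deriv u s = 0 := by
  intro s hs
  have hanti := antitoneOn_radialEnergy hd.le hF hu hode
  have hconst : ∀ x ∈ Ioo 0 r, radialEnergy F u x = radialEnergy F u 0 := fun x hx =>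
    le_antisymm (hanti self_mem_Ici (mem_Ici.2 hx.1.le) hx.1.le)
      (hE ▸ hanti (mem_Ici.2 hx.1.le) (mem_Ici.2 (hx.1.trans hx.2).le) hx.2.le)
  have hzero : HasDerivAt (radialEnergy F u) 0 s :=
    (hasDerivAt_const s (radialEnergy F u 0)).congr_of_eventuallyEq
      (eventually_of_mem (Ioo_mem_nhds hs.1 hs.2) hconst)
  have h := (hasDerivAt_radialEnergy hF hu hode hs.1).unique hzero
  have hpos : 0 < (d - 1) / s := div_pos (by linarith) hs.1
  simpa [hpos.ne'] using h

end RadialEnergy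

theorem lt_of_radial_ode {f u : ℝ → ℝ} {d a : ℝ} (hf : Continuous f)
    (hfa : ∀ s, a ≤ s → 0 < f s) (hd : 1 < d) (hu : ContDiff ℝ 2 u) (hu0 : u 0 = a)
    (hu'0 : deriv u 0 = 0)
    (hode : ∀ r, 0 < r → deriv (deriv u) r + (d - 1) / r * deriv u r + f (u r) = 0)
    {r : ℝ} (hr : 0 < r) : u r < a := by
  set F : ℝ → ℝ := fun t => ∫ x in (0 : ℝ)..t, f x
  have hF : ∀ t, HasDerivAt F (f t) t := fun t => (hf.integral_hasStrictDerivAt 0 t).hasDerivAt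
  have hFmono : StrictMonoOn F (Ici a) :=
    strictMonoOn_of_deriv_pos (convex_Ici a)
      (continuous_iff_continuousAt.2 fun t => (hF t).continuousAt).continuousOn
      fun x hx => (hF x).deriv ▸ hfa x (interior_subset hx)
  by_contra! hra
  have hE : radialEnergy F u r = radialEnergy F u 0 := by
    refine le_antisymm (antitoneOn_radialEnergy hd.le hF hu hode self_mem_Ici hr.le hr.le) ?_
    have hFa : F a ≤ F (u r) := hFmono.monotoneOn self_mem_Ici hra hra
    simp only [radialEnergy, hu0, hu'0]
    nlinarith [sq_nonneg (deriv u r)]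
  have hu' := deriv_eq_zero_of_radialEnergy_eq hd hF hu hode hE
  have hconst : ∀ s ∈ Icc 0 r, u s = a := by
    refine hu0 ▸ constant_of_has_deriv_right_zero hu.continuous.continuousOn fun x hx => ?_
    have hx0 : deriv u x = 0 :=
      hx.1.eq_or_lt.elim (fun h => h ▸ hu'0) fun h => hu' x ⟨h, hx.2⟩
    exact hx0 ▸ (hu.differentiable (by norm_num) x).hasDerivAt.hasDerivWithinAt
  have hs : r / 2 ∈ Ioo 0 r := ⟨by positivity, by linarith⟩
  have hu'' : deriv (deriv u) (r / 2) = 0 := by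
    have hev : deriv u =ᶠ[𝓝 (r / 2)] fun _ => 0 :=
      eventually_of_mem (Ioo_mem_nhds hs.1 hs.2) hu'
    rw [hev.deriv_eq, deriv_const]
  have h := hode (r / 2) hs.1
  rw [hu'', hu' _ hs, hconst _ (Ioo_subset_Icc_self hs)] at h
  linarith [hfa a le_rfl]

theorem stmt_6 (θ d a : ℝ) (hθ : 0 < θ) (hθ' : θ < 1/2) (hd : 1 < d) (ha : 1 < a)
    (f : ℝ → ℝ) (hf : ∀ s : ℝ, s ≠ 0 → f s = s - s * |s| ^ (-(2*θ))) (hf0 : f 0 = 0)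
    (u : ℝ → ℝ) (hu : ContDiff ℝ 2 u) (hu0 : u 0 = a) (hu'0 : deriv u 0 = 0)
    (hode : ∀ r : ℝ, 0 < r →
      deriv (deriv u) r + (d-1)/r * deriv u r + f (u r) = 0) :
    ∀ r : ℝ, 0 < r → u r < a := by
  have hfeq : f = fun s => s - s * |s| ^ (-(2 * θ)) := funext fun s => by
    rcases eq_or_ne s 0 with rfl | hs
    · simp [hf0]
    · exact hf s hs
  subst hfeq
  intro r hr
  exact lt_of_radial_ode (continuous_id.sub (continuous_mul_abs_rpow (by linarith)))
    (fun s hs => sub_pos.2 (mul_abs_rpow_lt_self (by linarith) (by linarith))) hd hu hu0 hu'0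
    hode hr
end

section
/- Let 0 < θ < 1/2, d > 1, 0 < a < 1, and let u be a C² solution on [0,∞) of u'' + ((d-1)/r)u' + f(u) = 0 with u(0) = a, u'(0) = 0, where f(s) = s - s|s|^{-2θ}. If t₁ > 0 is the first point with u'(t₁) = 0 and u is strictly increasing on (0, t₁), then u(t₁) > 1. -/
/-! If `u ≤ 1` up to the first critical point `t₁`, then `f (u r) < 0` on `(0, t₁)`, so the
radial flux `r ^ (d - 1) * u' r`, whose derivative is `-r ^ (d - 1) * f (u r)`, is strictly
increasing on `[0, t₁]`. But it vanishes at both ends. -/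

open Set

lemma self_sub_mul_abs_rpow_neg_lt_zero {p s : ℝ} (hp : 0 < p) (hs0 : 0 < s) (hs1 : s < 1) :
    s - s * |s| ^ (-p) < 0 := by
  have : 1 < s ^ (-p) := Real.one_lt_rpow_of_pos_of_lt_one_of_neg hs0 hs1 (by linarith)
  rw [abs_of_pos hs0]
  nlinarith

lemma hasDerivAt_rpow_mul_deriv {d r : ℝ} (hr : 0 < r) {u : ℝ → ℝ}
    (hu : DifferentiableAt ℝ (deriv u) r) :
    HasDerivAt (fun x => x ^ (d - 1) * deriv u x)
      (r ^ (d - 1) * (deriv (deriv u) r + (d - 1) / r * deriv u r)) r := by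
  refine ((Real.hasDerivAt_rpow_const (p := d - 1) (Or.inl hr.ne')).mul
    hu.hasDerivAt).congr_deriv ?_
  rw [Real.rpow_sub hr, Real.rpow_one]
  field_simp
  ring

lemma strictMonoOn_rpow_mul_deriv {d t : ℝ} (hd : 1 ≤ d) {u f : ℝ → ℝ}
    (hu : Differentiable ℝ (deriv u))
    (hode : ∀ r ∈ Ioo 0 t, deriv (deriv u) r + (d - 1) / r * deriv u r + f (u r) = 0)
    (hf : ∀ r ∈ Ioo 0 t, f (u r) < 0) :
    StrictMonoOn (fun r => r ^ (d - 1) * deriv u r) (Icc 0 t) := by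
  refine strictMonoOn_of_deriv_pos (convex_Icc 0 t) ?_ fun r hr => ?_
  · exact (continuousOn_id.rpow_const fun _ _ => Or.inr (by linarith)).mul
      hu.continuous.continuousOn
  · rw [interior_Icc] at hr
    rw [(hasDerivAt_rpow_mul_deriv hr.1 (hu r)).deriv]
    have := hode r hr
    exact mul_pos (Real.rpow_pos_of_pos hr.1 _) (by linarith [hf r hr])

theorem stmt_8_general (θ d a : ℝ) (hθ : 0 < θ) (hd : 1 < d)
    (ha0 : 0 < a)
    (f : ℝ → ℝ) (hf : ∀ s : ℝ, s ≠ 0 → f s = s - s * |s| ^ (-(2*θ)))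
    (u : ℝ → ℝ) (hu : ContDiff ℝ 2 u) (hu0 : u 0 = a)
    (hode : ∀ r : ℝ, 0 < r →
      deriv (deriv u) r + (d-1)/r * deriv u r + f (u r) = 0)
    (t₁ : ℝ) (ht₁ : 0 < t₁) (hcrit : deriv u t₁ = 0)
    (hmono : StrictMonoOn u (Set.Icc 0 t₁)) :
    1 < u t₁ := by
  by_contra! hle
  have h0 : (0 : ℝ) ∈ Icc 0 t₁ := left_mem_Icc.mpr ht₁.le
  have ht : t₁ ∈ Icc 0 t₁ := right_mem_Icc.mpr ht₁.le
  have hf_neg : ∀ r ∈ Ioo 0 t₁, f (u r) < 0 := fun r hr => by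
    have hur0 : 0 < u r := (ha0.trans_eq hu0.symm).trans (hmono h0 (Ioo_subset_Icc_self hr) hr.1)
    have hur1 : u r < 1 := (hmono (Ioo_subset_Icc_self hr) ht hr.2).trans_le hle
    rw [hf _ hur0.ne']
    exact self_sub_mul_abs_rpow_neg_lt_zero (by linarith) hur0 hur1
  have hflux := strictMonoOn_rpow_mul_deriv hd.le hu.differentiable_deriv_two
    (fun r hr => hode r hr.1) hf_neg h0 ht ht₁
  simp [hcrit, Real.zero_rpow (sub_ne_zero.mpr hd.ne')] at hflux

theorem stmt_8 (θ d a : ℝ) (hθ : 0 < θ) (hθ' : θ < 1/2) (hd : 1 < d)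
    (ha0 : 0 < a) (ha1 : a < 1)
    (f : ℝ → ℝ) (hf : ∀ s : ℝ, s ≠ 0 → f s = s - s * |s| ^ (-(2*θ))) (hf0 : f 0 = 0)
    (u : ℝ → ℝ) (hu : ContDiff ℝ 2 u) (hu0 : u 0 = a) (hu'0 : deriv u 0 = 0)
    (hode : ∀ r : ℝ, 0 < r →
      deriv (deriv u) r + (d-1)/r * deriv u r + f (u r) = 0)
    (t₁ : ℝ) (ht₁ : 0 < t₁) (hcrit : deriv u t₁ = 0)
    (hfirst : ∀ r ∈ Set.Ioo 0 t₁, deriv u r ≠ 0)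
    (hmono : StrictMonoOn u (Set.Icc 0 t₁)) :
    1 < u t₁ :=
  stmt_8_general θ d a hθ hd ha0 f hf u hu hu0 hode t₁ ht₁ hcrit hmono
end

section
/- Let 0 < θ < 1/2, d > 1, and let u be a C² solution of u'' + ((d-1)/r)u' + f(u) = 0 on (0,∞), with f(s) = s - s|s|^{-2θ}. Suppose there exist strictly increasing sequences (ζ_k) → ∞ of critical points of u with u'(ζ_k) = 0 and |u(ζ_k)| → 1, and a sequence (t_k) → ∞ with u(t_k) = 0 and ζ_k < t_k < ζ_{k+1}. Then a contradiction follows; i.e., such a configuration cannot occur. -/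
/-!
With `F(s) = s²/2 - |s|^p/p` and `p = 2 - 2θ ∈ (1, 2)` we have `F' = f`, so along a solution the
energy `E(r) = u'(r)²/2 + F(u(r))` satisfies `E' = -((d-1)/r) u'² ≤ 0`. At a critical point
`ζ_k` with `|u(ζ_k)|` close to `1` the energy is close to `F(1) = 1/2 - 1/p < 0`, while at the
later zero `t_k` it is `u'(t_k)²/2 ≥ 0`, contradicting monotonicity.
-/

open Set Filter Topology

noncomputable def powerPotential (p s : ℝ) : ℝ := s ^ 2 / 2 - |s| ^ p / p

section PowerPotential

variable {p : ℝ}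

theorem hasDerivAt_powerPotential (hp : 1 < p) (s : ℝ) :
    HasDerivAt (powerPotential p) (s - s * |s| ^ (p - 2)) s := by
  have hsq : HasDerivAt (fun x : ℝ => x ^ 2 / 2) s s := by
    simpa using (hasDerivAt_pow 2 s).div_const 2
  refine (hsq.sub ((hasDerivAt_abs_rpow s hp).div_const p)).congr_deriv ?_
  field_simp [(zero_lt_one.trans hp).ne']

theorem continuous_powerPotential (hp : 1 < p) : Continuous (powerPotential p) :=
  continuous_iff_continuousAt.2 fun s => (hasDerivAt_powerPotential hp s).continuousAt

theorem powerPotential_abs (s : ℝ) : powerPotential p |s| = powerPotential p s := by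
  simp only [powerPotential, sq_abs, abs_abs]

theorem powerPotential_zero (hp : p ≠ 0) : powerPotential p 0 = 0 := by
  simp [powerPotential, Real.zero_rpow hp]

theorem powerPotential_one_neg (hp₀ : 0 < p) (hp₂ : p < 2) : powerPotential p 1 < 0 := by
  rw [powerPotential, abs_one, Real.one_rpow, one_pow, sub_neg,
    div_lt_div_iff₀ two_pos hp₀]
  linarith

end PowerPotential

theorem antitoneOn_energy {u F f c : ℝ → ℝ} (hu : Differentiable ℝ u)
    (hu' : Differentiable ℝ (deriv u)) (hF : ∀ s, HasDerivAt F (f s) s)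
    (hc : ∀ r ∈ Ioi (0 : ℝ), 0 ≤ c r)
    (hode : ∀ r ∈ Ioi (0 : ℝ), deriv (deriv u) r + c r * deriv u r + f (u r) = 0) :
    AntitoneOn (fun r => deriv u r ^ 2 / 2 + F (u r)) (Ioi 0) := by
  have hE : ∀ r, HasDerivAt (fun r => deriv u r ^ 2 / 2 + F (u r))
      (deriv u r * deriv (deriv u) r + f (u r) * deriv u r) r := fun r => by
    have hsq := ((hu' r).hasDerivAt.pow 2).div_const 2
    refine (hsq.add ((hF (u r)).comp r (hu r).hasDerivAt)).congr_deriv ?_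
    push_cast
    ring
  refine antitoneOn_of_deriv_nonpos (convex_Ioi 0)
    (fun r _ => (hE r).continuousAt.continuousWithinAt)
    (fun r _ => (hE r).differentiableAt.differentiableWithinAt) fun r hr => ?_
  rw [interior_Ioi] at hr
  have hdissipation : deriv u r * deriv (deriv u) r + f (u r) * deriv u r
      = -(c r * deriv u r ^ 2) := by
    rw [show deriv (deriv u) r = -(c r * deriv u r) - f (u r) by linarith [hode r hr]]
    ring
  rw [(hE r).deriv, hdissipation, neg_nonpos]
  exact mul_nonneg (hc r hr) (sq_nonneg _)

theorem stmt_11_general (θ d : ℝ) (hθ : 0 < θ) (hθ' : θ < 1/2) (hd : 1 < d)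
    (f : ℝ → ℝ) (hf : ∀ s : ℝ, s ≠ 0 → f s = s - s * |s| ^ (-(2*θ))) (hf0 : f 0 = 0)
    (u : ℝ → ℝ) (hu : ContDiff ℝ 2 u)
    (hode : ∀ r : ℝ, 0 < r →
      deriv (deriv u) r + (d-1)/r * deriv u r + f (u r) = 0)
    (ζ t : ℕ → ℝ) (hζpos : ∀ k, 0 < ζ k)
    (hζcrit : ∀ k, deriv u (ζ k) = 0)
    (hζval : Filter.Tendsto (fun k => |u (ζ k)|) Filter.atTop (nhds 1))
    (ht : ∀ k, u (t k) = 0) (hsep : ∀ k, ζ k < t k ∧ t k < ζ (k+1)) :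
    False := by
  set p := 2 - 2 * θ
  have hp : 1 < p := by linarith
  have hF : ∀ s, HasDerivAt (powerPotential p) (f s) s := fun s => by
    convert hasDerivAt_powerPotential hp s using 1
    rcases eq_or_ne s 0 with rfl | hs
    · simp [hf0]
    · rw [hf s hs, show p - 2 = -(2 * θ) by ring]
  have hE := antitoneOn_energy (hu.differentiable two_ne_zero) hu.differentiable_deriv_two hF
    (fun r hr => div_nonneg (by linarith) (le_of_lt hr)) hode
  have hlim : Tendsto (fun k => powerPotential p (u (ζ k))) atTop (𝓝 (powerPotential p 1)) := by
    simpa only [Function.comp_def, powerPotential_abs] using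
      (continuous_powerPotential hp).continuousAt.tendsto.comp hζval
  obtain ⟨k, hk⟩ :=
    (hlim.eventually_lt_const (powerPotential_one_neg (by linarith) (by linarith))).exists
  have hmono := hE (hζpos k) (hζpos k |>.trans (hsep k).1) (hsep k).1.le
  simp only [hζcrit k, ht k, powerPotential_zero (by linarith : p ≠ 0)] at hmono
  nlinarith [sq_nonneg (deriv u (t k))]

theorem stmt_11 (θ d : ℝ) (hθ : 0 < θ) (hθ' : θ < 1/2) (hd : 1 < d)
    (f : ℝ → ℝ) (hf : ∀ s : ℝ, s ≠ 0 → f s = s - s * |s| ^ (-(2*θ))) (hf0 : f 0 = 0)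
    (u : ℝ → ℝ) (hu : ContDiff ℝ 2 u)
    (hode : ∀ r : ℝ, 0 < r →
      deriv (deriv u) r + (d-1)/r * deriv u r + f (u r) = 0)
    (ζ t : ℕ → ℝ) (hζpos : ∀ k, 0 < ζ k) (hζmono : StrictMono ζ)
    (hζtop : Filter.Tendsto ζ Filter.atTop Filter.atTop)
    (hζcrit : ∀ k, deriv u (ζ k) = 0)
    (hζval : Filter.Tendsto (fun k => |u (ζ k)|) Filter.atTop (nhds 1))
    (ht : ∀ k, u (t k) = 0) (hsep : ∀ k, ζ k < t k ∧ t k < ζ (k+1)) :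
    False :=
  stmt_11_general θ d hθ hθ' hd f hf hf0 u hu hode ζ t hζpos hζcrit hζval ht hsep
end

section
/- Let 0 < θ < 1/2, d > 1, p = (1-θ)^{-1/(2θ)}, a > p, and let u be a C² solution of u'' + ((d-1)/r)u' + f(u) = 0 on [0,∞) with u(0) = a, u'(0) = 0, where f(s) = s - s|s|^{-2θ}. Then u cannot be strictly decreasing on all of (0,∞) with limit 0 or 1 at infinity; in particular, if u is monotone decreasing and bounded below by 0, its limit L at infinity must satisfy f(L) = 0, and both possible values L ∈ {0, 1} lead to contradictions; hence u has a first zero ρ_a < ∞ or a first interior critical point. -/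
/-!
If the forcing `f (u r)` of `u'' + (d - 1) / r * u' + f u = 0` stays above a positive
constant (resp. below a negative one), the flux `r ^ (d - 1) * u'` drifts linearly, so
eventually `u' < 0` (resp. `u' > 0`). A solution cannot stay above `1`: since
`f s ≥ 2θ (s - 1)`, the quotient `z = -u' / (u - 1)` satisfies `z' ≥ ε (1 + z ^ 2)` and blows
up in finite time. It cannot decrease to `0` either: `f s ≤ -s ^ (1 - 2θ) / 2` near `0` is
sublinear, an energy comparison gives `|u'| ≳ u ^ (1 - θ)`, and then `u ^ θ` reaches `0` in
finite time. Hence a positive solution without critical points decreases to a zero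
`L ∈ {0, 1}` of `f`, and both limits are excluded.
-/

open Filter Set Real Topology

lemma monotoneOn_Ici_of_hasDerivAt_nonneg {v v' : ℝ → ℝ} {R : ℝ}
    (hv : ∀ x ≥ R, HasDerivAt v (v' x) x) (hv' : ∀ x ≥ R, 0 ≤ v' x) :
    MonotoneOn v (Ici R) :=
  monotoneOn_of_hasDerivWithinAt_nonneg (convex_Ici R)
    (fun x hx => (hv x hx).continuousAt.continuousWithinAt)
    (fun x hx => (hv x (interior_subset hx)).hasDerivWithinAt)
    (fun x hx => hv' x (interior_subset hx))

lemma tendsto_atTop_of_hasDerivAt_ge {v v' : ℝ → ℝ} {K : ℝ} (hK : 0 < K)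
    (hv : ∀ᶠ x in atTop, HasDerivAt v (v' x) x) (hv' : ∀ᶠ x in atTop, K ≤ v' x) :
    Tendsto v atTop atTop := by
  obtain ⟨R, hR⟩ := eventually_atTop.mp (hv.and hv')
  have hmono : MonotoneOn (fun x => v x - K * x) (Ici R) :=
    monotoneOn_Ici_of_hasDerivAt_nonneg
      (fun x hx => (hR x hx).1.sub ((hasDerivAt_id x).const_mul K))
      (fun x hx => by linarith [(hR x hx).2])
  refine tendsto_atTop_mono' atTop ?_
    (tendsto_atTop_add_const_left atTop (v R - K * R) (tendsto_id.const_mul_atTop hK))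
  filter_upwards [eventually_ge_atTop R] with x hx
  have := hmono self_mem_Ici hx hx
  simp only [id] at this ⊢
  linarith

lemma AntitoneOn.exists_tendsto_atTop {u : ℝ → ℝ} {a : ℝ} (hu : AntitoneOn u (Ici a))
    (hb : BddBelow (u '' Ici a)) : ∃ L, Tendsto u atTop (𝓝 L) := by
  have hanti : Antitone (fun r => u (max a r)) := fun x y hxy =>
    hu (le_max_left a x) (le_max_left a y) (max_le_max le_rfl hxy)
  have hbdd : BddBelow (range fun r => u (max a r)) :=
    hb.mono (range_subset_iff.mpr fun r => mem_image_of_mem u (le_max_left a r))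
  refine ⟨_, (tendsto_atTop_ciInf hanti hbdd).congr' ?_⟩
  filter_upwards [eventually_ge_atTop a] with r hr
  rw [max_eq_right hr]

lemma AntitoneOn.deriv_nonpos_of_mem_nhds {g : ℝ → ℝ} {s : Set ℝ} {x : ℝ}
    (hg : AntitoneOn g s) (hs : s ∈ 𝓝 x) : deriv g x ≤ 0 := by
  rw [← derivWithin_of_mem_nhds hs]
  exact hg.derivWithin_nonpos

lemma StrictAntiOn.lt_of_tendsto_atTop {u : ℝ → ℝ} {a L : ℝ} (hu : StrictAntiOn u (Ioi a))
    (hL : Tendsto u atTop (𝓝 L)) {r : ℝ} (hr : a < r) : L < u r := by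
  have hle : L ≤ u (r + 1) := by
    refine le_of_tendsto hL ?_
    filter_upwards [eventually_ge_atTop (r + 1)] with s hs
    exact hu.antitoneOn (show a < r + 1 by linarith) (show a < s by linarith) hs
  exact hle.trans_lt (hu hr (show a < r + 1 by linarith) (lt_add_one r))

lemma IsPreconnected.forall_pos_or_forall_neg {s : Set ℝ} {g : ℝ → ℝ}
    (hs : IsPreconnected s) (hg : ContinuousOn g s) (h0 : ∀ x ∈ s, g x ≠ 0) :
    (∀ x ∈ s, 0 < g x) ∨ ∀ x ∈ s, g x < 0 := by
  by_contra! h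
  obtain ⟨⟨x, hx, hgx⟩, y, hy, hgy⟩ := h
  obtain ⟨z, hz, hgz⟩ := hs.intermediate_value hx hy hg ⟨hgx, hgy⟩
  exact h0 z hz hgz

lemma not_eventually_riccati {z z' : ℝ → ℝ} {ε : ℝ} (hε : 0 < ε)
    (hz : ∀ᶠ x in atTop, HasDerivAt z (z' x) x)
    (hz' : ∀ᶠ x in atTop, ε * (1 + z x ^ 2) ≤ z' x) : False := by
  have htop : Tendsto (fun x => arctan (z x)) atTop atTop := by
    refine tendsto_atTop_of_hasDerivAt_ge hε (hz.mono fun x hx => hx.arctan) ?_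
    filter_upwards [hz'] with x hx
    rw [one_div_mul_eq_div, le_div_iff₀ (by positivity)]
    exact hx
  obtain ⟨x, hx⟩ := (htop.eventually_gt_atTop (π / 2)).exists
  exact (arctan_lt_pi_div_two _).not_gt hx

lemma not_eventually_pos_of_rpow_le_sq_deriv {u u' : ℝ → ℝ} {c q : ℝ} (hc : 0 < c)
    (hq : q < 1) (hu : ∀ᶠ r in atTop, HasDerivAt u (u' r) r)
    (hdec : ∀ᶠ r in atTop, u' r ≤ 0)
    (hsq : ∀ᶠ r in atTop, c * u r ^ (q + 1) ≤ u' r ^ 2) :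
    ¬ ∀ᶠ r in atTop, 0 < u r := by
  intro hpos
  set α := (1 - q) / 2
  set m := min c 1
  have hα : 0 < α := by simp only [α]; linarith
  have hm : 0 < m := lt_min hc one_pos
  -- `(u ^ α)' = α u ^ (α - 1) u' ≤ -α √c`, so `u ^ α` would turn negative
  have htop : Tendsto (fun r => -u r ^ α) atTop atTop := by
    refine tendsto_atTop_of_hasDerivAt_ge (v' := fun r => -(u' r * α * u r ^ (α - 1)))
      (mul_pos hα hm) ?_ ?_
    · filter_upwards [hu, hpos] with r hr hr0
      exact (hr.rpow_const (Or.inl hr0.ne')).neg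
    · filter_upwards [hpos, hdec, hsq] with r hr0 hr' hr
      set g := u r ^ (α - 1) * u' r
      have hg0 : g ≤ 0 := mul_nonpos_of_nonneg_of_nonpos (rpow_nonneg hr0.le _) hr'
      have hg2 : g ^ 2 * u r ^ (q + 1) = u' r ^ 2 := by
        have hexp : (α - 1) * (2 : ℕ) + (q + 1) = 0 := by simp only [α]; push_cast; ring
        rw [mul_pow, ← rpow_natCast, ← rpow_mul hr0.le, mul_right_comm, ← rpow_add hr0, hexp,
          rpow_zero, one_mul]
      have hcg : c ≤ g ^ 2 :=
        le_of_mul_le_mul_right (hg2 ▸ hr) (rpow_pos_of_pos hr0 _)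
      have hmg : g ≤ -m := by nlinarith [min_le_left c 1, min_le_right c 1]
      calc α * m ≤ α * -g := mul_le_mul_of_nonneg_left (by linarith) hα.le
        _ = _ := by ring
  obtain ⟨r, hr, hr0⟩ := ((htop.eventually_gt_atTop 0).and hpos).exists
  linarith [rpow_pos_of_pos hr0 α]

structure IsRadialSolution (d : ℝ) (f u : ℝ → ℝ) : Prop where
  differentiable : Differentiable ℝ u
  differentiable_deriv : Differentiable ℝ (deriv u)
  ode : ∀ r > 0, deriv (deriv u) r + (d - 1) / r * deriv u r + f (u r) = 0

namespace IsRadialSolution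

variable {d : ℝ} {f u : ℝ → ℝ}

lemma neg (hu : IsRadialSolution d f u) :
    IsRadialSolution d (fun s => -f (-s)) (fun r => -u r) := by
  have hderiv : deriv (fun r => -u r) = fun r => -deriv u r := deriv.fun_neg'
  refine ⟨hu.differentiable.neg, ?_, fun r hr => ?_⟩
  · rw [hderiv]; exact hu.differentiable_deriv.neg
  · simp only [hderiv, deriv.fun_neg', neg_neg]
    linear_combination -hu.ode r hr

lemma hasDerivAt_rpow_mul_deriv (hu : IsRadialSolution d f u) {r : ℝ} (hr : 0 < r) :
    HasDerivAt (fun s => s ^ (d - 1) * deriv u s) (-(r ^ (d - 1) * f (u r))) r := by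
  refine ((hasDerivAt_rpow_const (Or.inl hr.ne')).mul
    (hu.differentiable_deriv r).hasDerivAt).congr_deriv ?_
  rw [rpow_sub_one hr.ne']
  linear_combination r ^ (d - 1) * hu.ode r hr

lemma eventually_deriv_neg (hu : IsRadialSolution d f u) (hd : 1 ≤ d) {c : ℝ} (hc : 0 < c)
    (hf : ∀ᶠ r in atTop, c ≤ f (u r)) : ∀ᶠ r in atTop, deriv u r < 0 := by
  have htop : Tendsto (fun s => -(s ^ (d - 1) * deriv u s)) atTop atTop := by
    refine tendsto_atTop_of_hasDerivAt_ge (v' := fun r => r ^ (d - 1) * f (u r)) hc ?_ ?_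
    · filter_upwards [eventually_gt_atTop 0] with r hr
      simpa using (hu.hasDerivAt_rpow_mul_deriv hr).fun_neg
    · filter_upwards [hf, eventually_ge_atTop 1] with r hfr hr
      nlinarith [one_le_rpow hr (sub_nonneg.mpr hd)]
  filter_upwards [htop.eventually_gt_atTop 0, eventually_gt_atTop 0] with r hr hr0
  have := rpow_pos_of_pos hr0 (d - 1)
  nlinarith

lemma eventually_deriv_pos (hu : IsRadialSolution d f u) (hd : 1 ≤ d) {c : ℝ} (hc : 0 < c)
    (hf : ∀ᶠ r in atTop, f (u r) ≤ -c) : ∀ᶠ r in atTop, 0 < deriv u r := by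
  have hneg := hu.neg.eventually_deriv_neg hd hc
    (hf.mono fun r hr => by simp only [neg_neg]; linarith)
  simpa [deriv.fun_neg'] using hneg

lemma not_eventually_one_lt (hu : IsRadialSolution d f u) {c : ℝ} (hc : 0 < c)
    (hf : ∀ s > 1, c * (s - 1) ≤ f s) : ¬ ∀ᶠ r in atTop, 1 < u r := by
  intro hgt
  set m := min c 1
  have hm : 0 < m := lt_min hc one_pos
  have hdrift : ∀ᶠ r in atTop, |(d - 1) / r| ≤ m :=
    (tendsto_const_nhds.div_atTop tendsto_id).abs.eventually
      (ge_mem_nhds (by rwa [abs_zero]))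
  -- Riccati substitution `z = -u' / (u - 1)`
  refine not_eventually_riccati (half_pos hm)
    (z := fun r => -deriv u r / (u r - 1))
    (z' := fun r => (-deriv (deriv u) r * (u r - 1) - -deriv u r * deriv u r) / (u r - 1) ^ 2)
    ?_ ?_
  · filter_upwards [hgt] with r hr
    exact (hu.differentiable_deriv r).hasDerivAt.neg.div
      ((hu.differentiable r).hasDerivAt.sub_const 1) (by linarith)
  · filter_upwards [hgt, hdrift, eventually_gt_atTop 0] with r hr hE hr0
    have hode : -deriv (deriv u) r = (d - 1) / r * deriv u r + f (u r) := by
      linear_combination -hu.ode r hr0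
    set w := u r - 1
    set A := deriv u r
    set E := (d - 1) / r
    have hw : 0 < w := by linarith
    have hF : m * w ≤ f (u r) := (mul_le_mul_of_nonneg_right (min_le_left c 1) hw.le).trans
      (hf (u r) hr)
    have hAw : |A * w| ≤ (A ^ 2 + w ^ 2) / 2 := by
      rw [abs_le]; constructor <;> nlinarith [sq_nonneg (A + w), sq_nonneg (A - w)]
    have hcross : -(m * ((A ^ 2 + w ^ 2) / 2)) ≤ E * (A * w) := by
      refine le_trans ?_ (neg_abs_le _)
      rw [abs_mul, neg_le_neg_iff]
      exact mul_le_mul hE hAw (abs_nonneg _) hm.le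
    rw [hode, div_pow, le_div_iff₀ (by positivity)]
    field_simp
    nlinarith [min_le_right c 1]

lemma not_tendsto_zero (hu : IsRadialSolution d f u) (hd : 1 ≤ d) {c q : ℝ} (hc : 0 < c)
    (hq : -1 < q) (hq1 : q < 1) (hf : ∀ᶠ s in 𝓝[>] 0, f s ≤ -(c * s ^ q))
    (hpos : ∀ᶠ r in atTop, 0 < u r) (hdec : ∀ᶠ r in atTop, deriv u r ≤ 0) :
    ¬ Tendsto u atTop (𝓝 0) := by
  intro hlim
  have hconv : ∀ᶠ r in atTop, c * u r ^ q ≤ deriv (deriv u) r := by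
    filter_upwards [(tendsto_nhdsWithin_iff.mpr ⟨hlim, hpos⟩).eventually hf, hdec,
      eventually_gt_atTop 0] with r hfr hr' hr0
    have := hu.ode r hr0
    have : 0 ≤ (d - 1) / r := div_nonneg (by linarith) hr0.le
    nlinarith
  set k := 2 * c / (q + 1)
  obtain ⟨R, hR⟩ :=
    eventually_atTop.mp (((hpos.and hdec).and hconv).and (eventually_gt_atTop 0))
  -- the energy `k u ^ (q + 1) - u' ^ 2` is nondecreasing and bounded by `k u ^ (q + 1) → 0`
  have hmono : MonotoneOn (fun r => k * u r ^ (q + 1) - deriv u r ^ 2) (Ici R) := by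
    refine monotoneOn_Ici_of_hasDerivAt_nonneg
      (v' := fun r => 2 * deriv u r * (c * u r ^ q - deriv (deriv u) r)) (fun r hr => ?_)
      (fun r hr => mul_nonneg_of_nonpos_of_nonpos (by linarith [(hR r hr).1.1.2])
        (by linarith [(hR r hr).1.2]))
    refine ((((hu.differentiable r).hasDerivAt.rpow_const
      (Or.inl (hR r hr).1.1.1.ne')).const_mul k).sub
      ((hu.differentiable_deriv r).hasDerivAt.pow 2)).congr_deriv ?_
    have hq0 : q + 1 ≠ 0 := by linarith
    simp only [k, add_sub_cancel_right]
    field_simp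
    ring
  have hk0 : Tendsto (fun r => k * u r ^ (q + 1)) atTop (𝓝 0) := by
    simpa [zero_rpow (by linarith : 0 < q + 1).ne'] using
      (hlim.rpow_const (Or.inr (by linarith : (0 : ℝ) ≤ q + 1))).const_mul k
  have henergy : ∀ r ≥ R, k * u r ^ (q + 1) ≤ deriv u r ^ 2 := by
    intro r hr
    have : k * u r ^ (q + 1) - deriv u r ^ 2 ≤ 0 := by
      refine ge_of_tendsto hk0 ?_
      filter_upwards [eventually_ge_atTop r] with s hs
      have := hmono hr (le_trans hr hs : R ≤ s) hs
      simp only at this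
      linarith [sq_nonneg (deriv u s)]
    linarith
  refine not_eventually_pos_of_rpow_le_sq_deriv hc hq1
    (Eventually.of_forall fun r => (hu.differentiable r).hasDerivAt) hdec ?_ hpos
  filter_upwards [eventually_ge_atTop R] with r hr
  have hck : c ≤ k := by rw [le_div_iff₀ (by linarith)]; nlinarith
  exact (mul_le_mul_of_nonneg_right hck (rpow_nonneg (hR r hr).1.1.1.le _)).trans (henergy r hr)

lemma le_one_of_tendsto (hu : IsRadialSolution d f u) {c : ℝ} (hc : 0 < c)
    (hf : ∀ s > 1, c * (s - 1) ≤ f s) {L : ℝ} (hL : Tendsto u atTop (𝓝 L)) : L ≤ 1 := by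
  by_contra! h
  exact hu.not_eventually_one_lt hc hf (hL.eventually_const_lt h)

lemma apply_nonneg_of_tendsto (hu : IsRadialSolution d f u) (hd : 1 ≤ d)
    (hdec : ∀ᶠ r in atTop, deriv u r ≤ 0) {L : ℝ} (hL : Tendsto u atTop (𝓝 L))
    (hfL : ContinuousAt f L) : 0 ≤ f L := by
  by_contra! h
  have hinc := hu.eventually_deriv_pos hd (c := -f L / 2) (by linarith)
    ((hfL.tendsto.comp hL).eventually (ge_mem_nhds (show f L < -(-f L / 2) by linarith)))
  obtain ⟨r, hr, hr'⟩ := (hinc.and hdec).exists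
  linarith

end IsRadialSolution

noncomputable def sublinearF (θ s : ℝ) : ℝ := s - s * |s| ^ (-(2 * θ))

section sublinearF

variable {θ s : ℝ}

lemma sublinearF_of_pos (hs : 0 < s) : sublinearF θ s = s - s ^ (1 - 2 * θ) := by
  rw [sublinearF, abs_of_pos hs, sub_eq_add_neg 1, rpow_add hs, rpow_one]

lemma continuousAt_sublinearF (hs : s ≠ 0) : ContinuousAt (sublinearF θ) s :=
  continuousAt_id.sub (continuousAt_id.mul
    (continuous_abs.continuousAt.rpow_const (Or.inl (abs_ne_zero.mpr hs))))

-- weighted AM-GM: `s ^ (1 - 2θ) * 1 ^ (2θ) ≤ (1 - 2θ) s + 2θ`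
lemma mul_sub_one_le_sublinearF (hθ : 0 ≤ θ) (hθ' : θ ≤ 1 / 2) (hs : 0 < s) :
    2 * θ * (s - 1) ≤ sublinearF θ s := by
  have := geom_mean_le_arith_mean2_weighted (by linarith) (by linarith) hs.le zero_le_one
    (by ring : 1 - 2 * θ + 2 * θ = 1)
  rw [one_rpow, mul_one, mul_one] at this
  rw [sublinearF_of_pos hs]
  linarith

lemma sublinearF_nonpos (hθ : 0 ≤ θ) (hs : 0 < s) (hs1 : s ≤ 1) : sublinearF θ s ≤ 0 := by
  rw [sublinearF_of_pos hs, sub_nonpos]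
  simpa using rpow_le_rpow_of_exponent_ge hs hs1 (by linarith : 1 - 2 * θ ≤ 1)

lemma eq_one_of_sublinearF_eq_zero (hθ : θ ≠ 0) (hs : 0 < s) (h : sublinearF θ s = 0) :
    s = 1 := by
  by_contra hs1
  rw [sublinearF_of_pos hs, sub_eq_zero] at h
  nth_rw 1 [← rpow_one s] at h
  have := (rpow_right_inj hs hs1).mp h
  exact hθ (by linarith)

lemma eventually_sublinearF_le (hθ : 0 < θ) :
    ∀ᶠ s in 𝓝[>] 0, sublinearF θ s ≤ -(1 / 2 * s ^ (1 - 2 * θ)) := by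
  have hsmall : Tendsto (fun s : ℝ => s ^ (2 * θ)) (𝓝[>] 0) (𝓝 0) := by
    simpa [zero_rpow (by positivity : 2 * θ ≠ 0)] using
      ((continuousAt_id (x := (0 : ℝ))).rpow_const
        (Or.inr (by positivity : (0 : ℝ) ≤ 2 * θ))).tendsto.mono_left nhdsWithin_le_nhds
  filter_upwards [hsmall.eventually (ge_mem_nhds (one_half_pos : (0 : ℝ) < 1 / 2)),
    self_mem_nhdsWithin] with s hs (hs0 : 0 < s)
  have hsplit : s = s ^ (2 * θ) * s ^ (1 - 2 * θ) := by
    rw [← rpow_add hs0, add_sub_cancel, rpow_one]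
  rw [sublinearF_of_pos hs0]
  nlinarith [rpow_nonneg hs0.le (1 - 2 * θ)]

end sublinearF

namespace IsRadialSolution

variable {d θ : ℝ} {u : ℝ → ℝ}

lemma sublinearF_eq_zero_of_tendsto (hu : IsRadialSolution d (sublinearF θ) u) (hθ : 0 < θ)
    (hθ' : θ ≤ 1 / 2) (hd : 1 ≤ d) (hdec : ∀ᶠ r in atTop, deriv u r ≤ 0)
    (hnn : ∀ᶠ r in atTop, 0 ≤ u r) {L : ℝ} (hL : Tendsto u atTop (𝓝 L)) :
    sublinearF θ L = 0 := by
  have hL1 : L ≤ 1 := hu.le_one_of_tendsto (by positivity)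
    (fun s hs => mul_sub_one_le_sublinearF hθ.le hθ' (by linarith)) hL
  rcases (ge_of_tendsto hL hnn).eq_or_lt with rfl | hL0
  · simp [sublinearF]
  · exact (sublinearF_nonpos hθ.le hL0 hL1).antisymm
      (hu.apply_nonneg_of_tendsto hd hdec hL (continuousAt_sublinearF hL0.ne'))

lemma sublinearF_not_tendsto_zero_or_one (hu : IsRadialSolution d (sublinearF θ) u)
    (hθ : 0 < θ) (hθ' : θ ≤ 1 / 2) (hd : 1 ≤ d) (hanti : StrictAntiOn u (Ioi 0)) :
    ¬ (Tendsto u atTop (𝓝 0) ∨ Tendsto u atTop (𝓝 1)) := by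
  rintro (hL | hL)
  · refine hu.not_tendsto_zero hd one_half_pos (by linarith) (by linarith)
      (eventually_sublinearF_le hθ) ?_ ?_ hL
    · filter_upwards [eventually_gt_atTop 0] with r hr using hanti.lt_of_tendsto_atTop hL hr
    · filter_upwards [eventually_gt_atTop 0] with r hr
      exact hanti.antitoneOn.deriv_nonpos_of_mem_nhds (Ioi_mem_nhds hr)
  · refine hu.not_eventually_one_lt (by positivity)
      (fun s hs => mul_sub_one_le_sublinearF hθ.le hθ' (by linarith)) ?_
    filter_upwards [eventually_gt_atTop 0] with r hr using hanti.lt_of_tendsto_atTop hL hr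

lemma sublinearF_exists_zero_or_critical (hu : IsRadialSolution d (sublinearF θ) u)
    (hθ : 0 < θ) (hθ' : θ ≤ 1 / 2) (hd : 1 ≤ d) (hu0 : 1 < u 0) :
    (∃ ρ : ℝ, 0 < ρ ∧ u ρ = 0) ∨ (∃ r : ℝ, 0 < r ∧ deriv u r = 0) := by
  by_contra! h
  obtain ⟨hzero, hcrit⟩ := h
  have hcont := hu.differentiable.continuous
  have hpos : ∀ r ≥ 0, 0 < u r := by
    intro r hr
    by_contra! hur
    obtain ⟨ρ, hρ, huρ⟩ := intermediate_value_Icc' hr hcont.continuousOn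
      (show (0 : ℝ) ∈ Icc (u r) (u 0) from ⟨hur, by linarith⟩)
    rcases hρ.1.eq_or_lt with rfl | hρ0
    · linarith
    · exact hzero ρ hρ0 huρ
  rcases isPreconnected_Ioi.forall_pos_or_forall_neg
    hu.differentiable_deriv.continuous.continuousOn hcrit with hinc | hdec
  · -- `u ≥ u 0 > 1` keeps the forcing positive, which eventually forces `u' < 0`
    have hmono : MonotoneOn u (Ici 0) := (strictMonoOn_of_deriv_pos (convex_Ici 0)
      hcont.continuousOn (by simpa using hinc)).monotoneOn
    have hforce : ∀ᶠ r in atTop, 2 * θ * (u 0 - 1) ≤ sublinearF θ (u r) := by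
      filter_upwards [eventually_ge_atTop 0] with r hr
      have := hmono self_mem_Ici hr hr
      have := mul_sub_one_le_sublinearF hθ.le hθ' (hpos r hr)
      nlinarith
    obtain ⟨r, hr, hr0⟩ := ((hu.eventually_deriv_neg hd (by nlinarith) hforce).and
      (eventually_gt_atTop 0)).exists
    linarith [hinc r hr0]
  · have hanti : StrictAntiOn u (Ici 0) := strictAntiOn_of_deriv_neg (convex_Ici 0)
      hcont.continuousOn (by simpa using hdec)
    obtain ⟨L, hL⟩ := hanti.antitoneOn.exists_tendsto_atTop ⟨0, by
      rintro _ ⟨r, hr, rfl⟩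
      exact (hpos r hr).le⟩
    have hnn : ∀ᶠ r in atTop, 0 ≤ u r :=
      eventually_ge_atTop 0 |>.mono fun r hr => (hpos r hr).le
    have hfL := hu.sublinearF_eq_zero_of_tendsto hθ hθ' hd
      (eventually_gt_atTop 0 |>.mono fun r hr => (hdec r hr).le) hnn hL
    have hL0 : 0 ≤ L := ge_of_tendsto hL hnn
    refine hu.sublinearF_not_tendsto_zero_or_one hθ hθ' hd (hanti.mono Ioi_subset_Ici_self) ?_
    rcases hL0.eq_or_lt with rfl | hL0
    · exact Or.inl hL
    · exact Or.inr (eq_one_of_sublinearF_eq_zero hθ.ne' hL0 hfL ▸ hL)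

end IsRadialSolution

theorem stmt_12_general (θ d a : ℝ) (hθ : 0 < θ) (hθ' : θ < 1/2) (hd : 1 < d)
    (p : ℝ) (hp : p = (1-θ) ^ (-(1/(2*θ)))) (ha : p < a)
    (f : ℝ → ℝ) (hf : ∀ s : ℝ, s ≠ 0 → f s = s - s * |s| ^ (-(2*θ))) (hf0 : f 0 = 0)
    (u : ℝ → ℝ) (hu : ContDiff ℝ 2 u) (hu0 : u 0 = a)
    (hode : ∀ r : ℝ, 0 < r →
      deriv (deriv u) r + (d-1)/r * deriv u r + f (u r) = 0) :
    (AntitoneOn u (Set.Ici 0) → (∀ r : ℝ, 0 ≤ r → 0 ≤ u r) →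
      ∀ L : ℝ, Filter.Tendsto u Filter.atTop (nhds L) → f L = 0) ∧
    ¬ (StrictAntiOn u (Set.Ioi 0) ∧
        (Filter.Tendsto u Filter.atTop (nhds 0) ∨ Filter.Tendsto u Filter.atTop (nhds 1))) ∧
    ((∃ ρ : ℝ, 0 < ρ ∧ u ρ = 0) ∨ (∃ r : ℝ, 0 < r ∧ deriv u r = 0)) := by
  obtain rfl : f = sublinearF θ := funext fun s => by
    rcases eq_or_ne s 0 with rfl | hs
    · simp [hf0, sublinearF]
    · exact hf s hs
  have hsol : IsRadialSolution d (sublinearF θ) u :=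
    ⟨hu.differentiable (by norm_num), hu.differentiable_deriv_two, hode⟩
  have hp1 : 1 < p := hp ▸ one_lt_rpow_of_pos_of_lt_one_of_neg (by linarith) (by linarith)
    (neg_neg_of_pos (by positivity))
  refine ⟨fun hanti hnn L hL => ?_, fun ⟨hanti, hL⟩ => ?_, ?_⟩
  · refine hsol.sublinearF_eq_zero_of_tendsto hθ hθ'.le hd.le ?_
      (eventually_ge_atTop 0 |>.mono hnn) hL
    filter_upwards [eventually_gt_atTop 0] with r hr
    exact hanti.deriv_nonpos_of_mem_nhds (Ici_mem_nhds hr)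
  · exact hsol.sublinearF_not_tendsto_zero_or_one hθ hθ'.le hd.le hanti hL
  · exact hsol.sublinearF_exists_zero_or_critical hθ hθ'.le hd.le (hu0 ▸ hp1.trans ha)

theorem stmt_12 (θ d a : ℝ) (hθ : 0 < θ) (hθ' : θ < 1/2) (hd : 1 < d)
    (p : ℝ) (hp : p = (1-θ) ^ (-(1/(2*θ)))) (ha : p < a)
    (f : ℝ → ℝ) (hf : ∀ s : ℝ, s ≠ 0 → f s = s - s * |s| ^ (-(2*θ))) (hf0 : f 0 = 0)
    (u : ℝ → ℝ) (hu : ContDiff ℝ 2 u) (hu0 : u 0 = a) (hu'0 : deriv u 0 = 0)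
    (hode : ∀ r : ℝ, 0 < r →
      deriv (deriv u) r + (d-1)/r * deriv u r + f (u r) = 0) :
    (AntitoneOn u (Set.Ici 0) → (∀ r : ℝ, 0 ≤ r → 0 ≤ u r) →
      ∀ L : ℝ, Filter.Tendsto u Filter.atTop (nhds L) → f L = 0) ∧
    ¬ (StrictAntiOn u (Set.Ioi 0) ∧
        (Filter.Tendsto u Filter.atTop (nhds 0) ∨ Filter.Tendsto u Filter.atTop (nhds 1))) ∧
    ((∃ ρ : ℝ, 0 < ρ ∧ u ρ = 0) ∨ (∃ r : ℝ, 0 < r ∧ deriv u r = 0)) :=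
  stmt_12_general θ d a hθ hθ' hd p hp ha f hf hf0 u hu hu0 hode
end
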